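/- For arbitrary n the following two set equalities hold: (𝒢^{(0)×} ∪ 𝒢^{(1)×}) Λ_r^{(0)×} = 𝒢^{(0)×} ∪ 𝒢^{(1)×}, and (𝒢^{(0)×} ∪ 𝒢^{(1)×}) (Λ_r^{(0)} + 𝒢^n)^× = (𝒢^{(0)×} ∪ 𝒢^{(1)×}) (𝒢^0 + 𝒢^n)^×. -/

import Mathlib

/-!
Elements of `Λ_r^{(0)}` are even, so multiplying by its units does not leave
`𝒢^{(0)×} ∪ 𝒢^{(1)×}`, and `1 ∈ Λ_r^{(0)}`. For the second identity (with `r ≥ 1`; for `r = 0`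
`Λ_r^{(0)} = 𝒢^0`), write an invertible `T ∈ Λ_r^{(0)} + 𝒢^n` as `c + x + μ e_{1…n}` with `x` even
in the augmentation ideal of `Λ_r`. A product of generators in which a null generator occurs twice
vanishes, so `x` and `e_{1…n}` are nilpotent and annihilate each other. Hence invertibility
forces `c ≠ 0`, and `T = (1 + c⁻¹ x)(c + μ e_{1…n})` is an even unit times a unit of `𝒢^0 + 𝒢^n`.
-/

open Pointwise

noncomputable section

namespace ClGA

variable (𝔽 : Type*) [RCLike 𝔽] (p q r : ℕ)

/-- The diagonal weights: `p` ones, `q` minus-ones, `r` zeros. -/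
def w : Fin (p + q + r) → 𝔽 := fun i =>
  if (i : ℕ) < p then 1 else if (i : ℕ) < p + q then -1 else 0

/-- The quadratic form on `𝔽^n` whose Gram matrix is `diag(1,…,1,−1,…,−1,0,…,0)`. -/
def Q : QuadraticForm 𝔽 (Fin (p + q + r) → 𝔽) :=
  QuadraticMap.weightedSumSquares 𝔽 (w 𝔽 p q r)

/-- The degenerate Clifford geometric algebra `𝒢 = 𝒢_{p,q,r}`. -/
abbrev G := CliffordAlgebra (Q 𝔽 p q r)

/-- The generators `e_a`, `a = 1, …, n`. -/
def e (a : Fin (p + q + r)) : G 𝔽 p q r :=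
  CliffordAlgebra.ι (Q 𝔽 p q r) (Pi.single a 1)

/-- The even subspace `𝒢^{(0)}`: the `+1`-eigenspace of the grade involution. -/
def Geven : Submodule 𝔽 (G 𝔽 p q r) where
  carrier := {x | CliffordAlgebra.involute x = x}
  add_mem' := by
    intro a b ha hb
    simp only [Set.mem_setOf_eq, map_add] at ha hb ⊢
    rw [ha, hb]
  zero_mem' := by simp
  smul_mem' := by
    intro c x hx
    simp only [Set.mem_setOf_eq, map_smul] at hx ⊢
    rw [hx]

/-- The odd subspace `𝒢^{(1)}`: the `−1`-eigenspace of the grade involution. -/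
def Godd : Submodule 𝔽 (G 𝔽 p q r) where
  carrier := {x | CliffordAlgebra.involute x = -x}
  add_mem' := by
    intro a b ha hb
    simp only [Set.mem_setOf_eq, map_add] at ha hb ⊢
    rw [ha, hb, neg_add]
  zero_mem' := by simp
  smul_mem' := by
    intro c x hx
    simp only [Set.mem_setOf_eq, map_smul] at hx ⊢
    rw [hx, smul_neg]

/-- The grade-1 subspace `𝒢^1`, the span of the generators. -/
def G1 : Submodule 𝔽 (G 𝔽 p q r) := Submodule.span 𝔽 (Set.range (e 𝔽 p q r))

/-- The scalar (grade-0) subspace `𝒢^0 = 𝔽·1`. -/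
def G0 : Submodule 𝔽 (G 𝔽 p q r) := Submodule.span 𝔽 {(1 : G 𝔽 p q r)}

/-- The element `e_{1…n} = e_1 e_2 ⋯ e_n`. -/
def eTop : G 𝔽 p q r := (List.ofFn (e 𝔽 p q r)).prod

/-- The grade-`n` subspace `𝒢^n = 𝔽·e_{1…n}`. -/
def Gn : Submodule 𝔽 (G 𝔽 p q r) := Submodule.span 𝔽 {eTop 𝔽 p q r}

/-- The Grassmann subalgebra `Λ_r` generated by the null generators. -/
def Λr : Subalgebra 𝔽 (G 𝔽 p q r) :=
  Algebra.adjoin 𝔽 {x | ∃ a : Fin (p + q + r), p + q ≤ (a : ℕ) ∧ x = e 𝔽 p q r a}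

/-- `Λ_r` viewed as a subspace of `𝒢`. -/
def Λrs : Submodule 𝔽 (G 𝔽 p q r) := Subalgebra.toSubmodule (Λr 𝔽 p q r)

/-- The even part `Λ_r^{(0)} = Λ_r ∩ 𝒢^{(0)}`. -/
def Λr0 : Submodule 𝔽 (G 𝔽 p q r) := Λrs 𝔽 p q r ⊓ Geven 𝔽 p q r

/-- The Jacobson radical `rad 𝒢` of `𝒢`: the two-sided ideal generated by the
null generators. -/
def radG : Submodule 𝔽 (G 𝔽 p q r) :=
  Submodule.span 𝔽 {x | ∃ (u v : G 𝔽 p q r) (a : Fin (p + q + r)),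
    p + q ≤ (a : ℕ) ∧ x = u * e 𝔽 p q r a * v}

/-- `rad 𝒢^{(0)} = rad 𝒢 ∩ 𝒢^{(0)}`. -/
def radG0 : Submodule 𝔽 (G 𝔽 p q r) := radG 𝔽 p q r ⊓ Geven 𝔽 p q r

/-- For a subset `S ⊆ 𝒢`, `S^×` denotes those elements of `S` invertible in `𝒢`. -/
def ux (S : Set (G 𝔽 p q r)) : Set (G 𝔽 p q r) := {x ∈ S | IsUnit x}

/-- `𝒢^{(0)×} ∪ 𝒢^{(1)×}` (the group `P^±_{p,q,r}`). -/
def Epm : Set (G 𝔽 p q r) :=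
  ux 𝔽 p q r ↑(Geven 𝔽 p q r) ∪ ux 𝔽 p q r ↑(Godd 𝔽 p q r)

/-- `(T⁻¹)^̂ · T`, the grade involution of the inverse times `T`. -/
def tw (T : G 𝔽 p q r) : G 𝔽 p q r :=
  CliffordAlgebra.involute (Ring.inverse T) * T

/-- The invertible elements `T` with `T W T⁻¹ ⊆ W` (adjoint representation). -/
def gammaAd (W : Submodule 𝔽 (G 𝔽 p q r)) : Set (G 𝔽 p q r) :=
  {T | IsUnit T ∧ ∀ U ∈ W, T * U * Ring.inverse T ∈ W}

/-- The invertible elements `T` with `T̂ W T⁻¹ ⊆ W` (twisted adjoint representation). -/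
def gammaTw (W : Submodule 𝔽 (G 𝔽 p q r)) : Set (G 𝔽 p q r) :=
  {T | IsUnit T ∧ ∀ U ∈ W, CliffordAlgebra.involute T * U * Ring.inverse T ∈ W}


theorem _root_.List.mul_prod_map_eq_zero_of_mem {ι A : Type*} [Ring A] (f : ι → A) {a : ι}
    (hsq : f a * f a = 0) (hanti : ∀ b ≠ a, f a * f b = -(f b * f a)) {L : List ι}
    (ha : a ∈ L) : f a * (L.map f).prod = 0 := by
  induction L with
  | nil => simp at ha
  | cons b L ih =>
    rw [List.map_cons, List.prod_cons, ← mul_assoc]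
    rcases eq_or_ne b a with rfl | hba
    · rw [hsq, zero_mul]
    · rw [hanti b hba, neg_mul, mul_assoc, ih ((List.mem_cons.mp ha).resolve_left hba.symm),
        mul_zero, neg_zero]

theorem _root_.List.prod_map_mul_prod_map_eq_zero_of_mem {ι A : Type*} [Ring A] (f : ι → A)
    {a : ι} (hsq : f a * f a = 0) (hanti : ∀ b ≠ a, f a * f b = -(f b * f a))
    {L M : List ι} (hL : a ∈ L) (hM : a ∈ M) : (L.map f).prod * (M.map f).prod = 0 := by
  obtain ⟨L₁, L₂, rfl⟩ := List.append_of_mem hL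
  rw [List.map_append, List.prod_append, List.map_cons, List.prod_cons, mul_assoc, mul_assoc,
    ← List.prod_append, ← List.map_append,
    List.mul_prod_map_eq_zero_of_mem f hsq hanti (List.mem_append_right _ hM), mul_zero]

theorem _root_.List.prod_map_eq_zero_of_not_nodup {ι A : Type*} [Ring A] (f : ι → A)
    {s : Set ι} (hsq : ∀ a ∈ s, f a * f a = 0)
    (hanti : ∀ a ∈ s, ∀ b ≠ a, f a * f b = -(f b * f a)) {L : List ι} (hL : ∀ a ∈ L, a ∈ s)
    (hnd : ¬ L.Nodup) : (L.map f).prod = 0 := by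
  induction L with
  | nil => exact absurd List.nodup_nil hnd
  | cons b L ih =>
    have hb : b ∈ s := hL b List.mem_cons_self
    rw [List.map_cons, List.prod_cons]
    by_cases hbL : b ∈ L
    · exact List.mul_prod_map_eq_zero_of_mem f (hsq b hb) (hanti b hb) hbL
    · rw [ih (fun a ha => hL a (List.mem_cons_of_mem b ha))
        (fun hnd' => hnd (List.nodup_cons.mpr ⟨hbL, hnd'⟩)), mul_zero]

section FactorNilpotent

variable {K A : Type*} [Field K] [Ring A] [Algebra K A]

theorem ne_zero_of_isUnit_algebraMap_add [Nontrivial A] {c : K} {z : A} (hz : IsNilpotent z)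
    (hu : IsUnit (algebraMap K A c + z)) : c ≠ 0 := by
  rintro rfl
  rw [map_zero, zero_add] at hu
  exact hz.not_isUnit hu

theorem one_add_smul_mul_algebraMap_add {c : K} (hc : c ≠ 0) {x y : A} (hxy : x * y = 0) :
    (1 + c⁻¹ • x) * (algebraMap K A c + y) = algebraMap K A c + x + y := by
  rw [add_mul, one_mul, mul_add, smul_mul_assoc, smul_mul_assoc, hxy, smul_zero, add_zero,
    ← Algebra.commutes, ← Algebra.smul_def, smul_smul, inv_mul_cancel₀ hc, one_smul,
    add_right_comm]

end FactorNilpotent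

section Generators

variable {𝔽 p q r}

theorem Q_apply (v : Fin (p + q + r) → 𝔽) : Q 𝔽 p q r v = ∑ i, w 𝔽 p q r i * (v i * v i) := by
  simp only [Q, QuadraticMap.weightedSumSquares_apply, smul_eq_mul]

theorem e_mul_self (a : Fin (p + q + r)) :
    e 𝔽 p q r a * e 𝔽 p q r a = algebraMap 𝔽 _ (w 𝔽 p q r a) := by
  classical
  rw [e, CliffordAlgebra.ι_sq_scalar, Q_apply,
    Finset.sum_eq_single a (fun b _ hb => by simp [hb]) (by simp)]
  simp

theorem e_mul_self_of_null {a : Fin (p + q + r)} (ha : p + q ≤ (a : ℕ)) :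
    e 𝔽 p q r a * e 𝔽 p q r a = 0 := by
  rw [e_mul_self, w, if_neg (by omega), if_neg (by omega), map_zero]

theorem e_mul_e_of_ne {a b : Fin (p + q + r)} (hab : a ≠ b) :
    e 𝔽 p q r a * e 𝔽 p q r b = -(e 𝔽 p q r b * e 𝔽 p q r a) := by
  classical
  refine eq_neg_of_add_eq_zero_left ?_
  rw [e, e, CliffordAlgebra.ι_mul_ι_add_swap, QuadraticMap.polar, Q_apply, Q_apply, Q_apply,
    ← Finset.sum_sub_distrib, ← Finset.sum_sub_distrib, Finset.sum_eq_zero, map_zero]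
  intro i _
  simp only [Pi.add_apply, Pi.single_apply]
  split_ifs with h1 h2
  · exact absurd (h1.symm.trans h2) hab
  all_goals ring

theorem prod_e_mul_prod_e_eq_zero {a : Fin (p + q + r)} (ha : p + q ≤ (a : ℕ))
    {L M : List (Fin (p + q + r))} (hL : a ∈ L) (hM : a ∈ M) :
    (L.map (e 𝔽 p q r)).prod * (M.map (e 𝔽 p q r)).prod = 0 :=
  List.prod_map_mul_prod_map_eq_zero_of_mem _ (e_mul_self_of_null ha)
    (fun _ hb => e_mul_e_of_ne hb.symm) hL hM

theorem length_le_of_nodup_of_null {L : List (Fin (p + q + r))} (hL : L.Nodup)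
    (hnull : ∀ a ∈ L, p + q ≤ (a : ℕ)) : L.length ≤ r := by
  classical
  have hsub : (L.map Fin.val).toFinset ⊆ Finset.Ico (p + q) (p + q + r) := by
    intro i hi
    obtain ⟨a, ha, rfl⟩ := List.mem_map.mp (List.mem_toFinset.mp hi)
    exact Finset.mem_Ico.mpr ⟨hnull a ha, a.isLt⟩
  simpa [List.toFinset_card_of_nodup (hL.map Fin.val_injective)] using Finset.card_le_card hsub

theorem prod_e_eq_zero_of_length_gt {L : List (Fin (p + q + r))}
    (hnull : ∀ a ∈ L, p + q ≤ (a : ℕ)) (hlen : r < L.length) : (L.map (e 𝔽 p q r)).prod = 0 :=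
  List.prod_map_eq_zero_of_not_nodup _ (s := {a : Fin (p + q + r) | p + q ≤ (a : ℕ)}) (L := L)
    (fun _ ha => e_mul_self_of_null ha) (fun _ _ _ hb => e_mul_e_of_ne hb.symm) hnull
    (fun hnd => (length_le_of_nodup_of_null hnd hnull).not_gt hlen)

theorem eTop_eq_prod : eTop 𝔽 p q r = ((List.finRange (p + q + r)).map (e 𝔽 p q r)).prod := by
  rw [eTop, List.ofFn_eq_map]

theorem eTop_mul_eTop (hr : 1 ≤ r) : eTop 𝔽 p q r * eTop 𝔽 p q r = 0 := by
  rw [eTop_eq_prod]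
  exact prod_e_mul_prod_e_eq_zero (a := ⟨p + q, by omega⟩) le_rfl
    (List.mem_finRange _) (List.mem_finRange _)

end Generators

def nullProds (k : ℕ) : Set (G 𝔽 p q r) :=
  {x | ∃ L : List (Fin (p + q + r)), k ≤ L.length ∧ (∀ a ∈ L, p + q ≤ (a : ℕ)) ∧
    x = (L.map (e 𝔽 p q r)).prod}

/-- `nullSpan 1` is the augmentation ideal of `Λ_r`. -/
def nullSpan (k : ℕ) : Submodule 𝔽 (G 𝔽 p q r) := Submodule.span 𝔽 (nullProds 𝔽 p q r k)

section NullSpan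

variable {𝔽 p q r}

theorem nullProds_mul_subset (j k : ℕ) :
    nullProds 𝔽 p q r j * nullProds 𝔽 p q r k ⊆ nullProds 𝔽 p q r (j + k) := by
  rintro _ ⟨_, ⟨L, hL, hLnull, rfl⟩, _, ⟨M, hM, hMnull, rfl⟩, rfl⟩
  refine ⟨L ++ M, by simp only [List.length_append]; omega, ?_, by simp⟩
  intro a ha
  exact (List.mem_append.mp ha).elim (hLnull a) (hMnull a)

theorem nullSpan_mul_le (j k : ℕ) :
    nullSpan 𝔽 p q r j * nullSpan 𝔽 p q r k ≤ nullSpan 𝔽 p q r (j + k) := by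
  rw [nullSpan, nullSpan, Submodule.span_mul_span]
  exact Submodule.span_mono (nullProds_mul_subset j k)

theorem pow_mem_nullSpan {x : G 𝔽 p q r} (hx : x ∈ nullSpan 𝔽 p q r 1) (k : ℕ) :
    x ^ k ∈ nullSpan 𝔽 p q r k := by
  induction k with
  | zero => exact Submodule.subset_span ⟨[], le_rfl, by simp, by simp⟩
  | succ k ih => exact pow_succ x k ▸ nullSpan_mul_le k 1 (Submodule.mul_mem_mul ih hx)

theorem nullSpan_eq_bot : nullSpan 𝔽 p q r (r + 1) = ⊥ := by
  rw [nullSpan, Submodule.span_eq_bot]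
  rintro _ ⟨L, hlen, hnull, rfl⟩
  exact prod_e_eq_zero_of_length_gt hnull hlen

theorem isNilpotent_of_mem_nullSpan_one {x : G 𝔽 p q r} (hx : x ∈ nullSpan 𝔽 p q r 1) :
    IsNilpotent x :=
  ⟨r + 1, by simpa [nullSpan_eq_bot] using pow_mem_nullSpan hx (r + 1)⟩

theorem mul_eTop_of_mem_nullSpan_one {x : G 𝔽 p q r} (hx : x ∈ nullSpan 𝔽 p q r 1) :
    x * eTop 𝔽 p q r = 0 := by
  suffices nullSpan 𝔽 p q r 1 ≤ LinearMap.ker (LinearMap.mulRight 𝔽 (eTop 𝔽 p q r)) from this hx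
  refine Submodule.span_le.mpr ?_
  rintro _ ⟨_ | ⟨a, L⟩, hlen, hnull, rfl⟩
  · simp at hlen
  · rw [SetLike.mem_coe, LinearMap.mem_ker, LinearMap.mulRight_apply, eTop_eq_prod]
    exact prod_e_mul_prod_e_eq_zero (hnull a List.mem_cons_self) List.mem_cons_self
      (List.mem_finRange a)

theorem eTop_mul_of_mem_nullSpan_one {x : G 𝔽 p q r} (hx : x ∈ nullSpan 𝔽 p q r 1) :
    eTop 𝔽 p q r * x = 0 := by
  suffices nullSpan 𝔽 p q r 1 ≤ LinearMap.ker (LinearMap.mulLeft 𝔽 (eTop 𝔽 p q r)) from this hx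
  refine Submodule.span_le.mpr ?_
  rintro _ ⟨_ | ⟨a, L⟩, hlen, hnull, rfl⟩
  · simp at hlen
  · rw [SetLike.mem_coe, LinearMap.mem_ker, LinearMap.mulLeft_apply, eTop_eq_prod]
    exact prod_e_mul_prod_e_eq_zero (hnull a List.mem_cons_self) (List.mem_finRange a)
      List.mem_cons_self

theorem Λrs_le_G0_sup_nullSpan : Λrs 𝔽 p q r ≤ G0 𝔽 p q r ⊔ nullSpan 𝔽 p q r 1 := by
  have hclosure : ∀ x ∈ Submonoid.closure
      {x | ∃ a : Fin (p + q + r), p + q ≤ (a : ℕ) ∧ x = e 𝔽 p q r a}, x ∈ nullProds 𝔽 p q r 0 := by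
    intro x hx
    induction hx using Submonoid.closure_induction with
    | mem _ hx =>
      obtain ⟨a, ha, rfl⟩ := hx
      exact ⟨[a], Nat.zero_le _, by simpa using ha, by simp⟩
    | one => exact ⟨[], le_rfl, by simp, by simp⟩
    | mul _ _ _ _ hx hy => exact nullProds_mul_subset 0 0 ⟨_, hx, _, hy, rfl⟩
  rw [Λrs, Λr, Algebra.adjoin_eq_span, Submodule.span_le]
  intro x hx
  obtain ⟨_ | ⟨a, L⟩, -, hnull, rfl⟩ := hclosure x hx
  · exact Submodule.mem_sup_left (Submodule.mem_span_singleton_self _)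
  · exact Submodule.mem_sup_right (Submodule.subset_span ⟨_, by simp, hnull, rfl⟩)

end NullSpan

section Units

variable {𝔽 p q r}

theorem mem_Geven_iff {x : G 𝔽 p q r} : x ∈ Geven 𝔽 p q r ↔ CliffordAlgebra.involute x = x :=
  Iff.rfl

theorem mem_Godd_iff {x : G 𝔽 p q r} : x ∈ Godd 𝔽 p q r ↔ CliffordAlgebra.involute x = -x :=
  Iff.rfl

theorem mul_mem_Epm {x y : G 𝔽 p q r} (hx : x ∈ Epm 𝔽 p q r) (hy : y ∈ Epm 𝔽 p q r) :
    x * y ∈ Epm 𝔽 p q r := by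
  simp only [Epm, ux, Set.mem_union, Set.mem_ofPred_eq, SetLike.mem_coe, mem_Geven_iff,
    mem_Godd_iff, map_mul] at hx hy ⊢
  rcases hx with ⟨hx, hxu⟩ | ⟨hx, hxu⟩ <;> rcases hy with ⟨hy, hyu⟩ | ⟨hy, hyu⟩ <;>
    simp [hx, hy, hxu.mul hyu]

theorem Epm_mul_ux_eq_Epm {W : Submodule 𝔽 (G 𝔽 p q r)} (hW : W ≤ Geven 𝔽 p q r)
    (h1 : (1 : G 𝔽 p q r) ∈ W) : Epm 𝔽 p q r * ux 𝔽 p q r W = Epm 𝔽 p q r := by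
  refine (Set.mul_subset_iff.mpr fun x hx y hy => mul_mem_Epm hx (Or.inl ⟨hW hy.1, hy.2⟩)).antisymm
    fun x hx => ⟨x, hx, 1, ⟨h1, isUnit_one⟩, mul_one x⟩

theorem G0_le_Λr0 : G0 𝔽 p q r ≤ Λr0 𝔽 p q r := by
  rw [G0, Submodule.span_le, Set.singleton_subset_iff]
  exact ⟨Subalgebra.one_mem _, map_one _⟩

theorem Λr0_eq_G0_of_r_eq_zero (hr : r = 0) : Λr0 𝔽 p q r = G0 𝔽 p q r := by
  subst hr
  refine le_antisymm (fun x hx => ?_) G0_le_Λr0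
  simpa [nullSpan_eq_bot] using Λrs_le_G0_sup_nullSpan hx.1

theorem exists_Geven_mul_of_mem_ux_Λr0_sup_Gn (hr : 1 ≤ r) {T : G 𝔽 p q r}
    (hT : T ∈ ux 𝔽 p q r ↑(Λr0 𝔽 p q r ⊔ Gn 𝔽 p q r)) :
    ∃ E ∈ ux 𝔽 p q r ↑(Geven 𝔽 p q r), ∃ s ∈ ux 𝔽 p q r ↑(G0 𝔽 p q r ⊔ Gn 𝔽 p q r),
      T = E * s := by
  obtain ⟨hTmem, hTu⟩ := hT
  obtain ⟨u, ⟨huΛ, hueven⟩, _, hy, rfl⟩ := Submodule.mem_sup.mp hTmem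
  obtain ⟨μ, rfl⟩ := Submodule.mem_span_singleton.mp hy
  obtain ⟨_, hg, x, hx, rfl⟩ := Submodule.mem_sup.mp (Λrs_le_G0_sup_nullSpan huΛ)
  obtain ⟨c, rfl⟩ := Submodule.mem_span_singleton.mp hg
  rw [← Algebra.algebraMap_eq_smul_one] at hTu hueven ⊢
  set y := μ • eTop 𝔽 p q r
  have hxy : x * y = 0 := by rw [mul_smul_comm, mul_eTop_of_mem_nullSpan_one hx, smul_zero]
  have hyx : y * x = 0 := by rw [smul_mul_assoc, eTop_mul_of_mem_nullSpan_one hx, smul_zero]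
  have hx_nil := isNilpotent_of_mem_nullSpan_one hx
  have hy_nil : IsNilpotent y := ⟨2, by rw [sq, smul_mul_smul_comm, eTop_mul_eTop hr, smul_zero]⟩
  have hc : c ≠ 0 := ne_zero_of_isUnit_algebraMap_add
    (Commute.isNilpotent_add (hxy.trans hyx.symm) hx_nil hy_nil) (add_assoc _ x y ▸ hTu)
  have hx_even : CliffordAlgebra.involute x = x := by
    rw [SetLike.mem_coe, mem_Geven_iff, map_add, AlgHom.commutes] at hueven
    exact add_left_cancel hueven
  have hs_unit : IsUnit (algebraMap 𝔽 (G 𝔽 p q r) c + y) :=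
    hy_nil.isUnit_add_left_of_commute ((isUnit_iff_ne_zero.mpr hc).map _)
      (Algebra.commute_algebraMap_right c y)
  refine ⟨1 + c⁻¹ • x, ⟨?_, (hx_nil.smul c⁻¹).isUnit_one_add⟩, _, ⟨?_, hs_unit⟩,
    (one_add_smul_mul_algebraMap_add hc hxy).symm⟩
  · rw [SetLike.mem_coe, mem_Geven_iff, map_add, map_one, map_smul, hx_even]
  · exact Submodule.add_mem _
      (Submodule.mem_sup_left (Submodule.mem_span_singleton.mpr
        ⟨c, (Algebra.algebraMap_eq_smul_one c).symm⟩))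
      (Submodule.mem_sup_right (Submodule.smul_mem _ μ (Submodule.mem_span_singleton_self _)))

end Units

theorem stmt7 :
    Epm 𝔽 p q r * ux 𝔽 p q r ↑(Λr0 𝔽 p q r) = Epm 𝔽 p q r ∧
    Epm 𝔽 p q r * ux 𝔽 p q r ↑(Λr0 𝔽 p q r ⊔ Gn 𝔽 p q r)
      = Epm 𝔽 p q r * ux 𝔽 p q r ↑(G0 𝔽 p q r ⊔ Gn 𝔽 p q r) := by
  refine ⟨Epm_mul_ux_eq_Epm inf_le_right (G0_le_Λr0 (Submodule.mem_span_singleton_self 1)), ?_⟩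
  rcases Nat.eq_zero_or_pos r with hr | hr
  · rw [Λr0_eq_G0_of_r_eq_zero hr]
  refine (Set.mul_subset_iff.mpr fun E hE T hT => ?_).antisymm
    (Set.mul_subset_mul_left fun x hx => ⟨sup_le_sup_right G0_le_Λr0 _ hx.1, hx.2⟩)
  obtain ⟨E', hE', s, hs, rfl⟩ := exists_Geven_mul_of_mem_ux_Λr0_sup_Gn hr hT
  exact ⟨E * E', mul_mem_Epm hE (Or.inl hE'), s, hs, mul_assoc _ _ _⟩

end ClGA
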